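/- Let r > 0, c₀ > 0, and β ∈ L¹([-r,0];ℝ) with ∫_{-r}^0 |β(θ)| dθ < 1. Define n(λ) = 1 + ∫_{-r}^0 β(θ) e^{λθ} dθ. Then there exists μ > 0 such that: for every λ ∈ ℂ with n(λ) ≠ 0 and λ / n(λ) ∈ (-∞, -c₀] (i.e., λ/n(λ) is real and ≤ -c₀), one has Re λ ≤ -μ. -/

import Mathlib

/-!
Write `n(λ) = 1 + I(λ)`. On a half-plane `Re λ ≥ -a` the kernel satisfies `|e^{λθ}| ≤ e^{ar}` on
`[-r, 0]`, so `‖I(λ)‖ ≤ q := e^{ar} ‖β‖₁`, and `q < 1` once `a > 0` is small. There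
`Re n(λ) ≥ 1 - q > 0`, so `λ = γ n(λ)` with `γ ≤ -c₀` forces `Re λ ≤ -c₀ (1 - q)`.
Hence `μ = min a (c₀ (1 - q))` works.
-/

open MeasureTheory Set Filter Topology

theorem exists_pos_exp_mul_mul_lt_one (r : ℝ) {B : ℝ} (hB : B < 1) :
    ∃ a > 0, Real.exp (a * r) * B < 1 := by
  have hlim : Tendsto (fun a : ℝ => Real.exp (a * r) * B) (𝓝[>] 0) (𝓝 B) := by
    have hcont : Continuous fun a : ℝ => Real.exp (a * r) * B := by fun_prop
    simpa using (hcont.tendsto 0).mono_left nhdsWithin_le_nhds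
  exact ((hlim.eventually_lt_const hB).and self_mem_nhdsWithin).exists.imp
    fun a ha => ⟨ha.2, ha.1⟩

theorem norm_cexp_mul_le_of_mem_Icc {r a : ℝ} {lam : ℂ} (ha : 0 ≤ a) (hlam : -a ≤ lam.re)
    {θ : ℝ} (hθ : θ ∈ Icc (-r) 0) : ‖Complex.exp (lam * θ)‖ ≤ Real.exp (a * r) := by
  rw [Complex.norm_exp, Complex.re_mul_ofReal, Real.exp_le_exp]
  nlinarith [hθ.1, hθ.2]

theorem norm_setIntegral_mul_cexp_le {β : ℝ → ℝ} {r a : ℝ} {lam : ℂ}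
    (hβ : IntegrableOn β (Icc (-r) 0)) (ha : 0 ≤ a) (hlam : -a ≤ lam.re) :
    ‖∫ θ in Icc (-r) 0, (β θ : ℂ) * Complex.exp (lam * θ)‖
      ≤ Real.exp (a * r) * ∫ θ in Icc (-r) 0, |β θ| := by
  rw [← integral_const_mul]
  refine norm_integral_le_of_norm_le (hβ.abs.const_mul _) ?_
  filter_upwards [ae_restrict_mem measurableSet_Icc] with θ hθ
  rw [norm_mul, Complex.norm_real, Real.norm_eq_abs, mul_comm]
  exact mul_le_mul_of_nonneg_right (norm_cexp_mul_le_of_mem_Icc ha hlam hθ) (abs_nonneg _)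

theorem re_le_of_eq_mul_one_add {lam I : ℂ} {γ c q : ℝ} (hc : 0 ≤ c) (hq : q ≤ 1)
    (hγ : γ ≤ -c) (hI : ‖I‖ ≤ q) (h : lam = γ * (1 + I)) : lam.re ≤ -(c * (1 - q)) := by
  have hIre : 1 - q ≤ 1 + I.re := by linarith [neg_abs_le I.re, Complex.abs_re_le_norm I]
  have hlam : lam.re = γ * (1 + I.re) := by simp [h]
  rw [hlam]
  nlinarith

theorem stmt3_general (r c₀ : ℝ) (hc₀ : 0 < c₀) (β : ℝ → ℝ)
    (hβ : IntegrableOn β (Set.Icc (-r) 0))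
    (hβ1 : (∫ θ in Set.Icc (-r) 0, |β θ|) < 1) :
    ∃ μ > (0:ℝ), ∀ lam : ℂ,
      (1 + ∫ θ in Set.Icc (-r) 0, (β θ : ℂ) * Complex.exp (lam * (θ : ℂ))) ≠ 0 →
      (∃ γ : ℝ, γ ≤ -c₀ ∧
        lam / (1 + ∫ θ in Set.Icc (-r) 0, (β θ : ℂ) * Complex.exp (lam * (θ : ℂ)))
          = (γ : ℂ)) →
      lam.re ≤ -μ := by
  obtain ⟨a, ha, hq⟩ := exists_pos_exp_mul_mul_lt_one r hβ1
  refine ⟨min a (c₀ * (1 - Real.exp (a * r) * ∫ θ in Icc (-r) 0, |β θ|)),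
    lt_min ha (mul_pos hc₀ (sub_pos.2 hq)), fun lam hn ⟨γ, hγ, hdiv⟩ => ?_⟩
  by_cases hre : lam.re < -a
  · exact hre.le.trans (neg_le_neg (min_le_left _ _))
  · have hI := norm_setIntegral_mul_cexp_le hβ ha.le (not_lt.1 hre)
    exact (re_le_of_eq_mul_one_add hc₀.le hq.le hγ hI ((div_eq_iff hn).1 hdiv)).trans
      (neg_le_neg (min_le_right _ _))

/-- the `Γ₁` part — characteristic values `lam` with
`lam / n(lam)` real and `≤ -c₀` have uniformly negative real part. -/
theorem stmt3 (r c₀ : ℝ) (hr : 0 < r) (hc₀ : 0 < c₀) (β : ℝ → ℝ)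
    (hβ : IntegrableOn β (Set.Icc (-r) 0))
    (hβ1 : (∫ θ in Set.Icc (-r) 0, |β θ|) < 1) :
    ∃ μ > (0:ℝ), ∀ lam : ℂ,
      (1 + ∫ θ in Set.Icc (-r) 0, (β θ : ℂ) * Complex.exp (lam * (θ : ℂ))) ≠ 0 →
      (∃ γ : ℝ, γ ≤ -c₀ ∧
        lam / (1 + ∫ θ in Set.Icc (-r) 0, (β θ : ℂ) * Complex.exp (lam * (θ : ℂ)))
          = (γ : ℂ)) →
      lam.re ≤ -μ :=
  stmt3_general r c₀ hc₀ β hβ hβ1
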